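/- arXiv:2602.18308 — 3 statements merged into one kernel-verified Lean document; each statement's English description precedes it below -/
import Mathlib

section
/- Let P be an n×n doubly stochastic real matrix all of whose entries are strictly positive. Then the powers P^L converge entrywise, as L → ∞, to the matrix (1/n)·J, where J is the n×n all-ones matrix. Equivalently, for every vector x ∈ ℝⁿ whose coordinates sum to zero, P^L x → 0 as L → ∞. -/
open Matrix Filter

/-- For a doubly stochastic matrix with strictly positive entries, the powers `P^L`
converge entrywise to the matrix `(1/n) · J`, where `J` is the all-ones matrix. -/
theorem doublyStochastic_pos_power_convergence (n : ℕ) (P : Matrix (Fin n) (Fin n) ℝ)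
    (hpos : ∀ i j, 0 < P i j)
    (hrow : ∀ i, ∑ j, P i j = 1)
    (hcol : ∀ j, ∑ i, P i j = 1) :
    ∀ i j, Tendsto (fun L : ℕ => (P ^ L) i j) atTop (nhds (1 / (n : ℝ))) := by
  rcases Nat.eq_zero_or_pos n with hn | hn
  · subst hn; intro i; exact i.elim0
  haveI : NeZero n := ⟨hn.ne'⟩
  have hne : (Finset.univ : Finset (Fin n)).Nonempty := Finset.univ_nonempty
  obtain ⟨p0, -, hmin⟩ := Finset.exists_min_image (Finset.univ ×ˢ Finset.univ)
    (fun p : Fin n × Fin n => P p.1 p.2)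
    ⟨(⟨0, hn⟩, ⟨0, hn⟩), by simp⟩
  set δ := P p0.1 p0.2 with hδdef
  have hδpos : 0 < δ := hpos _ _
  have hδle : ∀ i j, δ ≤ P i j := fun i j => hmin (i, j) (by simp)
  set r := max 0 (1 - 2 * δ) with hr
  have hr0 : 0 ≤ r := le_max_left _ _
  have hr1 : r < 1 := max_lt one_pos (by linarith)
  set M := fun (L : ℕ) (j : Fin n) => Finset.univ.sup' hne (fun i => (P ^ L) i j) with hM
  set m := fun (L : ℕ) (j : Fin n) => Finset.univ.inf' hne (fun i => (P ^ L) i j) with hm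
  have hgap0 : ∀ L j, 0 ≤ M L j - m L j := by
    intro L j
    have h1 := Finset.inf'_le (fun i => (P ^ L) i j) (Finset.mem_univ hne.choose)
    have h2 := Finset.le_sup' (fun i => (P ^ L) i j) (Finset.mem_univ hne.choose)
    linarith
  have key : ∀ L j, M (L + 1) j - m (L + 1) j ≤ r * (M L j - m L j) := by
    intro L j
    set x := fun k => (P ^ L) k j with hx
    have happly : ∀ i, (P ^ (L + 1)) i j = ∑ k, P i k * x k := by
      intro i; rw [pow_succ', Matrix.mul_apply]
    obtain ⟨k0, -, hk0⟩ := Finset.exists_mem_eq_inf' hne x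
    obtain ⟨k1, -, hk1⟩ := Finset.exists_mem_eq_sup' hne x
    have hxle : ∀ k, x k ≤ M L j := fun k => Finset.le_sup' x (Finset.mem_univ k)
    have hxge : ∀ k, m L j ≤ x k := fun k => Finset.inf'_le x (Finset.mem_univ k)
    have hub : ∀ i, ∑ k, P i k * x k ≤ M L j - δ * (M L j - m L j) := by
      intro i
      have h1 : ∑ k, P i k * (M L j - x k) = M L j - ∑ k, P i k * x k := by
        simp only [mul_sub]
        rw [Finset.sum_sub_distrib, ← Finset.sum_mul, hrow i, one_mul]
      have h2 : δ * (M L j - m L j) ≤ ∑ k, P i k * (M L j - x k) := by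
        have hterm : P i k0 * (M L j - x k0) ≤ ∑ k, P i k * (M L j - x k) :=
          Finset.single_le_sum (f := fun k => P i k * (M L j - x k))
            (fun k _ => mul_nonneg (hpos i k).le (by linarith [hxle k])) (Finset.mem_univ k0)
        have : δ * (M L j - m L j) ≤ P i k0 * (M L j - x k0) := by
          rw [← hk0]
          exact mul_le_mul (hδle i k0) le_rfl (by linarith [hgap0 L j, hk0]) (hpos i k0).le
        linarith
      linarith
    have hlb : ∀ i, m L j + δ * (M L j - m L j) ≤ ∑ k, P i k * x k := by
      intro i
      have h1 : ∑ k, P i k * (x k - m L j) = (∑ k, P i k * x k) - m L j := by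
        simp only [mul_sub]
        rw [Finset.sum_sub_distrib, ← Finset.sum_mul, hrow i, one_mul]
      have h2 : δ * (M L j - m L j) ≤ ∑ k, P i k * (x k - m L j) := by
        have hterm : P i k1 * (x k1 - m L j) ≤ ∑ k, P i k * (x k - m L j) :=
          Finset.single_le_sum (f := fun k => P i k * (x k - m L j))
            (fun k _ => mul_nonneg (hpos i k).le (by linarith [hxge k])) (Finset.mem_univ k1)
        have : δ * (M L j - m L j) ≤ P i k1 * (x k1 - m L j) := by
          rw [← hk1]
          exact mul_le_mul (hδle i k1) le_rfl (by linarith [hgap0 L j, hk1]) (hpos i k1).le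
        linarith
      linarith
    have hMle : M (L + 1) j ≤ M L j - δ * (M L j - m L j) := by
      apply Finset.sup'_le
      intro i _
      rw [happly i]; exact hub i
    have hmge : m L j + δ * (M L j - m L j) ≤ m (L + 1) j := by
      apply Finset.le_inf'
      intro i _
      rw [happly i]; exact hlb i
    have : M (L + 1) j - m (L + 1) j ≤ (1 - 2 * δ) * (M L j - m L j) := by nlinarith
    calc M (L + 1) j - m (L + 1) j ≤ (1 - 2 * δ) * (M L j - m L j) := this
      _ ≤ r * (M L j - m L j) := mul_le_mul_of_nonneg_right (le_max_right _ _) (hgap0 L j)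
  have hgeo : ∀ j L, M L j - m L j ≤ r ^ L * (M 0 j - m 0 j) := by
    intro j L
    induction L with
    | zero => simp
    | succ L ih =>
        calc M (L + 1) j - m (L + 1) j ≤ r * (M L j - m L j) := key L j
          _ ≤ r * (r ^ L * (M 0 j - m 0 j)) := mul_le_mul_of_nonneg_left ih hr0
          _ = r ^ (L + 1) * (M 0 j - m 0 j) := by ring
  have hsum : ∀ L j, ∑ i, (P ^ L) i j = 1 := by
    intro L
    induction L with
    | zero => intro j; simp [Matrix.one_apply]
    | succ L ih =>
        intro j
        have : ∀ i, (P ^ (L + 1)) i j = ∑ k, P i k * (P ^ L) k j := by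
          intro i; rw [pow_succ', Matrix.mul_apply]
        simp only [this]
        rw [Finset.sum_comm]
        have : ∀ k, ∑ i, P i k * (P ^ L) k j = (P ^ L) k j := by
          intro k; rw [← Finset.sum_mul, hcol k, one_mul]
        simp only [this]
        exact ih j
  have hnpos : (0 : ℝ) < n := Nat.cast_pos.mpr hn
  have hbetween : ∀ L j, m L j ≤ 1 / n ∧ 1 / (n : ℝ) ≤ M L j := by
    intro L j
    constructor
    · have h : (n : ℝ) * m L j ≤ ∑ i, (P ^ L) i j := by
        have := Finset.card_nsmul_le_sum Finset.univ (fun i => (P ^ L) i j) (m L j)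
          (fun i _ => Finset.inf'_le _ (Finset.mem_univ i))
        simpa [nsmul_eq_mul] using this
      rw [hsum L j] at h
      rw [le_div_iff₀ hnpos]
      linarith
    · have h : ∑ i, (P ^ L) i j ≤ (n : ℝ) * M L j := by
        have := Finset.sum_le_card_nsmul Finset.univ (fun i => (P ^ L) i j) (M L j)
          (fun i _ => Finset.le_sup' (fun i => (P ^ L) i j) (Finset.mem_univ i))
        simpa [nsmul_eq_mul] using this
      rw [hsum L j] at h
      rw [div_le_iff₀ hnpos]
      linarith
  intro i j
  have habs : ∀ L, |(P ^ L) i j - 1 / n| ≤ r ^ L * (M 0 j - m 0 j) := by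
    intro L
    have h1 : (P ^ L) i j ≤ M L j := Finset.le_sup' (fun i => (P ^ L) i j) (Finset.mem_univ i)
    have h2 : m L j ≤ (P ^ L) i j := Finset.inf'_le (fun i => (P ^ L) i j) (Finset.mem_univ i)
    obtain ⟨hb1, hb2⟩ := hbetween L j
    have := hgeo j L
    rw [abs_le]
    constructor <;> linarith
  have hlim : Tendsto (fun L : ℕ => r ^ L * (M 0 j - m 0 j)) atTop (nhds 0) := by
    have := (tendsto_pow_atTop_nhds_zero_of_lt_one hr0 hr1).mul_const (M 0 j - m 0 j)
    simpa using this
  have h0 : Tendsto (fun L : ℕ => |(P ^ L) i j - 1 / n|) atTop (nhds 0) :=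
    squeeze_zero (fun L => abs_nonneg _) habs hlim
  rw [tendsto_iff_dist_tendsto_zero]
  simpa [Real.dist_eq] using h0
end

section
/- For every n ≥ 1, the linear span (over ℝ) of the set of n×n doubly stochastic matrices equals the subspace of n×n real matrices M for which all row sums of M and all column sums of M are equal to one common value; consequently this span has dimension (n − 1)² + 1. -/
/-!
A matrix `M` with common line sum `c` becomes entrywise positive after adding `t` times the
all-ones matrix for large `t`, and a positive matrix with common line sum `s` is `s` times a
doubly stochastic matrix; hence `M` is a difference of two multiples of doubly stochastic
matrices. An `(m + 1) × (m + 1)` matrix with common line sum `c` is determined by `c` and its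
upper left `m × m` block, which can be arbitrary: this gives the dimension `m ^ 2 + 1`.
-/

open Matrix Finset

namespace Matrix

def commonLineSums (R n : Type*) [Semiring R] [Fintype n] : Submodule R (Matrix n n R) where
  carrier := {M | ∃ c : R, (∀ i, ∑ j, M i j = c) ∧ ∀ j, ∑ i, M i j = c}
  add_mem' := by
    rintro M N ⟨c, hMr, hMc⟩ ⟨d, hNr, hNc⟩
    exact ⟨c + d, fun i => by simp [sum_add_distrib, hMr, hNr],
      fun j => by simp [sum_add_distrib, hMc, hNc]⟩
  zero_mem' := ⟨0, by simp, by simp⟩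
  smul_mem' := by
    rintro a M ⟨c, hr, hc⟩
    exact ⟨a * c, fun i => by simp [← mul_sum, hr], fun j => by simp [← mul_sum, hc]⟩

section Span

variable {R n : Type*} [Fintype n] [DecidableEq n]

theorem span_doublyStochastic_le_commonLineSums [Semiring R] [PartialOrder R] [IsOrderedRing R] :
    Submodule.span R (doublyStochastic R n : Set (Matrix n n R)) ≤ commonLineSums R n :=
  Submodule.span_le.2 fun _ hP =>
    ⟨1, sum_row_of_mem_doublyStochastic hP, sum_col_of_mem_doublyStochastic hP⟩

variable [Field R] [LinearOrder R] [IsStrictOrderedRing R] [Nonempty n]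

theorem mem_span_doublyStochastic_of_pos {N : Matrix n n R} {s : R} (hN : ∀ i j, 0 < N i j)
    (hr : ∀ i, ∑ j, N i j = s) (hc : ∀ j, ∑ i, N i j = s) :
    N ∈ Submodule.span R (doublyStochastic R n : Set (Matrix n n R)) := by
  obtain ⟨i₀⟩ := ‹Nonempty n›
  have hs : 0 < s := hr i₀ ▸ sum_pos (fun j _ => hN i₀ j) univ_nonempty
  have hD : s⁻¹ • N ∈ doublyStochastic R n := by
    refine mem_doublyStochastic_iff_sum.2 ⟨fun i j => ?_, fun i => ?_, fun j => ?_⟩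
    · exact mul_nonneg (inv_nonneg.2 hs.le) (hN i j).le
    · simp [← mul_sum, hr, hs.ne']
    · simp [← mul_sum, hc, hs.ne']
  simpa [smul_smul, hs.ne'] using Submodule.smul_mem _ s (Submodule.subset_span hD)

theorem commonLineSums_le_span_doublyStochastic :
    commonLineSums R n ≤ Submodule.span R (doublyStochastic R n : Set (Matrix n n R)) := by
  rintro M ⟨c, hr, hc⟩
  obtain ⟨b, hb⟩ := (Set.finite_range fun p : n × n => M p.1 p.2).bddBelow
  obtain ⟨t, hMt⟩ : ∃ t, ∀ i j, 0 < M i j + t :=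
    ⟨1 - b, fun i j => by linarith [hb ⟨(i, j), rfl⟩]⟩
  have hdiff : M = (M + of fun _ _ => t) - t • of fun _ _ => 1 := by
    ext i j; simp
  rw [hdiff]
  refine Submodule.sub_mem _ ?_ (Submodule.smul_mem _ _ ?_)
  · refine mem_span_doublyStochastic_of_pos (s := c + Fintype.card n • t) hMt
      (fun i => ?_) (fun j => ?_)
    · simp [sum_add_distrib, hr]
    · simp [sum_add_distrib, hc]
  · exact mem_span_doublyStochastic_of_pos (s := Fintype.card n) (fun _ _ => one_pos)
      (fun _ => by simp) (fun _ => by simp)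

theorem span_doublyStochastic_eq_commonLineSums :
    Submodule.span R (doublyStochastic R n : Set (Matrix n n R)) = commonLineSums R n :=
  le_antisymm span_doublyStochastic_le_commonLineSums commonLineSums_le_span_doublyStochastic

end Span

section Border

variable {R : Type*} [CommRing R] (m : ℕ)

/- For `p = (A, c)`, the border entries are forced by all line sums being `c`: the corner
`∑ A - (m - 1) c` by the last column, after which the last row sums to `c` as well. -/
def borderWithLineSum :
    (Matrix (Fin m) (Fin m) R × R) →ₗ[R] Matrix (Fin (m + 1)) (Fin (m + 1)) R where
  toFun p := of fun i j =>
    Fin.lastCases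
      (Fin.lastCases ((∑ i, ∑ j, p.1 i j) - ((m : R) - 1) * p.2)
        (fun j => p.2 - ∑ i, p.1 i j) j)
      (fun i => Fin.lastCases (p.2 - ∑ j, p.1 i j) (fun j => p.1 i j) j) i
  map_add' p q := by
    ext i j
    induction i using Fin.lastCases <;> induction j using Fin.lastCases <;>
      simp [sum_add_distrib] <;> ring
  map_smul' a p := by
    ext i j
    induction i using Fin.lastCases <;> induction j using Fin.lastCases <;>
      simp [← mul_sum] <;> ring

variable {m}

@[simp]
theorem borderWithLineSum_castSucc_castSucc (p : Matrix (Fin m) (Fin m) R × R) (i j : Fin m) :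
    borderWithLineSum m p i.castSucc j.castSucc = p.1 i j := by
  simp [borderWithLineSum]

@[simp]
theorem borderWithLineSum_castSucc_last (p : Matrix (Fin m) (Fin m) R × R) (i : Fin m) :
    borderWithLineSum m p i.castSucc (Fin.last m) = p.2 - ∑ j, p.1 i j := by
  simp [borderWithLineSum]

@[simp]
theorem borderWithLineSum_last_castSucc (p : Matrix (Fin m) (Fin m) R × R) (j : Fin m) :
    borderWithLineSum m p (Fin.last m) j.castSucc = p.2 - ∑ i, p.1 i j := by
  simp [borderWithLineSum]

@[simp]
theorem borderWithLineSum_last_last (p : Matrix (Fin m) (Fin m) R × R) :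
    borderWithLineSum m p (Fin.last m) (Fin.last m) =
      (∑ i, ∑ j, p.1 i j) - ((m : R) - 1) * p.2 := by
  simp [borderWithLineSum]

theorem sum_row_borderWithLineSum (p : Matrix (Fin m) (Fin m) R × R) (i : Fin (m + 1)) :
    ∑ j, borderWithLineSum m p i j = p.2 := by
  induction i using Fin.lastCases with
  | last => simp [Fin.sum_univ_castSucc, sum_comm (f := p.1)]; ring
  | cast i => simp [Fin.sum_univ_castSucc]

theorem sum_col_borderWithLineSum (p : Matrix (Fin m) (Fin m) R × R) (j : Fin (m + 1)) :
    ∑ i, borderWithLineSum m p i j = p.2 := by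
  induction j using Fin.lastCases with
  | last => simp [Fin.sum_univ_castSucc]; ring
  | cast j => simp [Fin.sum_univ_castSucc]

theorem borderWithLineSum_injective : Function.Injective (borderWithLineSum (R := R) m) := by
  intro p q h
  ext i j
  · simpa using congr_fun₂ h i.castSucc j.castSucc
  · simpa [sum_row_borderWithLineSum] using congr_arg (fun M => ∑ j, M (Fin.last m) j) h

theorem range_borderWithLineSum :
    LinearMap.range (borderWithLineSum (R := R) m) = commonLineSums R (Fin (m + 1)) := by
  refine le_antisymm ?_ fun M ⟨c, hr, hc⟩ =>
    ⟨(M.submatrix Fin.castSucc Fin.castSucc, c), ?_⟩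
  · rintro M ⟨p, rfl⟩
    exact ⟨p.2, sum_row_borderWithLineSum p, sum_col_borderWithLineSum p⟩
  have hr' : ∀ i, ∑ j : Fin m, M i j.castSucc = c - M i (Fin.last m) := fun i => by
    rw [← hr i, Fin.sum_univ_castSucc]; ring
  have hc' : ∀ j, ∑ i : Fin m, M i.castSucc j = c - M (Fin.last m) j := fun j => by
    rw [← hc j, Fin.sum_univ_castSucc]; ring
  ext i j
  induction i using Fin.lastCases <;> induction j using Fin.lastCases
  all_goals simp [hr', hc']
  ring

theorem finrank_commonLineSums [StrongRankCondition R] :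
    Module.finrank R (commonLineSums R (Fin (m + 1))) = m ^ 2 + 1 := by
  rw [← range_borderWithLineSum, LinearMap.finrank_range_of_inj borderWithLineSum_injective]
  simp [Module.finrank_prod, Module.finrank_matrix, sq]

end Border

end Matrix

open Matrix

/-- The linear span of the `n × n` doubly stochastic matrices is the subspace of
matrices all of whose row sums and column sums are equal to one common value;
consequently this span has dimension `(n-1)² + 1`. -/
theorem span_doublyStochastic (n : ℕ) (hn : 1 ≤ n) :
    (Submodule.span ℝ {P : Matrix (Fin n) (Fin n) ℝ |
        (∀ i j, 0 ≤ P i j) ∧ (∀ i, ∑ j, P i j = 1) ∧ (∀ j, ∑ i, P i j = 1)} :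
      Set (Matrix (Fin n) (Fin n) ℝ)) =
      {M : Matrix (Fin n) (Fin n) ℝ |
        ∃ c : ℝ, (∀ i, ∑ j, M i j = c) ∧ (∀ j, ∑ i, M i j = c)} ∧
    Module.finrank ℝ (Submodule.span ℝ {P : Matrix (Fin n) (Fin n) ℝ |
        (∀ i j, 0 ≤ P i j) ∧ (∀ i, ∑ j, P i j = 1) ∧ (∀ j, ∑ i, P i j = 1)}) =
      (n - 1) ^ 2 + 1 := by
  obtain ⟨m, rfl⟩ := Nat.exists_eq_add_of_le' hn
  have hDS : {P : Matrix (Fin (m + 1)) (Fin (m + 1)) ℝ |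
      (∀ i j, 0 ≤ P i j) ∧ (∀ i, ∑ j, P i j = 1) ∧ (∀ j, ∑ i, P i j = 1)} =
      doublyStochastic ℝ (Fin (m + 1)) :=
    Set.ext fun _ => mem_doublyStochastic_iff_sum.symm
  rw [hDS, span_doublyStochastic_eq_commonLineSums, finrank_commonLineSums]
  exact ⟨rfl, by simp⟩
end

section
/- Let P be an n×n doubly stochastic real matrix all of whose entries are strictly positive, and let x ∈ ℝⁿ be a nonzero vector whose coordinates sum to zero. Then ‖P x‖₂ < ‖x‖₂; equivalently, the second-largest singular value of P is strictly less than 1. -/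
open Matrix

lemma jensen_sq (n : ℕ) (p y : Fin n → ℝ) (hp : ∀ j, 0 < p j)
    (hps : ∑ j, p j = 1) :
    (∑ j, p j * y j) ^ 2 ≤ ∑ j, p j * y j ^ 2 := by
  set m := ∑ j, p j * y j with hm
  have hid : ∑ j, p j * (y j - m) ^ 2
      = (∑ j, p j * y j ^ 2) - 2 * m * (∑ j, p j * y j) + m ^ 2 * (∑ j, p j) := by
    rw [Finset.sum_congr rfl (fun j _ => show p j * (y j - m) ^ 2
        = p j * y j ^ 2 - 2 * m * (p j * y j) + m ^ 2 * p j by ring),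
      Finset.sum_add_distrib, Finset.sum_sub_distrib, ← Finset.mul_sum, ← Finset.mul_sum]
  have h0 : 0 ≤ ∑ j, p j * (y j - m) ^ 2 :=
    Finset.sum_nonneg fun j _ => mul_nonneg (hp j).le (sq_nonneg _)
  rw [hid, hps, ← hm] at h0
  nlinarith [h0]

lemma jensen_sq_strict (n : ℕ) (p y : Fin n → ℝ) (hp : ∀ j, 0 < p j)
    (hps : ∑ j, p j = 1) (j k : Fin n) (hjk : y j ≠ y k) :
    (∑ j, p j * y j) ^ 2 < ∑ j, p j * y j ^ 2 := by
  set m := ∑ j, p j * y j with hm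
  have hid : ∑ j, p j * (y j - m) ^ 2
      = (∑ j, p j * y j ^ 2) - 2 * m * (∑ j, p j * y j) + m ^ 2 * (∑ j, p j) := by
    rw [Finset.sum_congr rfl (fun j _ => show p j * (y j - m) ^ 2
        = p j * y j ^ 2 - 2 * m * (p j * y j) + m ^ 2 * p j by ring),
      Finset.sum_add_distrib, Finset.sum_sub_distrib, ← Finset.mul_sum, ← Finset.mul_sum]
  have hwit : ∃ i ∈ Finset.univ, 0 < p i * (y i - m) ^ 2 := by
    rcases eq_or_ne (y j) m with h | h
    · have hk : y k ≠ m := fun hk => hjk (h.trans hk.symm)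
      exact ⟨k, Finset.mem_univ k, mul_pos (hp k)
        (pow_pos (abs_pos.mpr (sub_ne_zero_of_ne hk)) 2 |>.trans_eq (by rw [sq_abs]))⟩
    · exact ⟨j, Finset.mem_univ j, mul_pos (hp j)
        (pow_pos (abs_pos.mpr (sub_ne_zero_of_ne h)) 2 |>.trans_eq (by rw [sq_abs]))⟩
  have h0 : 0 < ∑ j, p j * (y j - m) ^ 2 :=
    Finset.sum_pos' (fun i _ => mul_nonneg (hp i).le (sq_nonneg _)) hwit
  rw [hid, hps, ← hm] at h0
  nlinarith [h0]

/-- A doubly stochastic matrix with strictly positive entries strictly contracts every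
nonzero vector whose coordinates sum to zero: `‖P x‖₂ < ‖x‖₂`. -/
theorem doublyStochastic_pos_strict_contraction (n : ℕ)
    (P : Matrix (Fin n) (Fin n) ℝ)
    (hpos : ∀ i j, 0 < P i j)
    (hrow : ∀ i, ∑ j, P i j = 1)
    (hcol : ∀ j, ∑ i, P i j = 1)
    (x : Fin n → ℝ) (hx : x ≠ 0) (hsum : ∑ i, x i = 0) :
    ‖(WithLp.equiv 2 (Fin n → ℝ)).symm (P.mulVec x)‖ <
      ‖(WithLp.equiv 2 (Fin n → ℝ)).symm x‖ := by
  have hn : 0 < n := by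
    rcases Nat.eq_zero_or_pos n with h | h
    · exfalso; apply hx; funext i; exact absurd i.2 (by omega)
    · exact h
  have i0 : Fin n := ⟨0, hn⟩
  -- x is not constant
  have hnc : ∃ j k, x j ≠ x k := by
    by_contra h
    push_neg at h
    apply hx
    have hall : ∀ j, x j = x i0 := fun j => h j i0
    have : ∑ i, x i = n * x i0 := by
      rw [Finset.sum_congr rfl (fun j _ => hall j)]
      simp [Finset.card_univ, mul_comm]
    rw [hsum] at this
    have hx0 : x i0 = 0 := by
      have hne : (n:ℝ) ≠ 0 := Nat.cast_ne_zero.mpr hn.ne'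
      rcases mul_eq_zero.mp this.symm with h1 | h1
      · exact absurd h1 hne
      · exact h1
    funext j; rw [hall j, hx0]; rfl
  obtain ⟨j, k, hjk⟩ := hnc
  have key : ∑ i, (P.mulVec x i) ^ 2 < ∑ i, x i ^ 2 := by
    have step1 : ∑ i, (P.mulVec x i) ^ 2 < ∑ i, ∑ j, P i j * x j ^ 2 := by
      apply Finset.sum_lt_sum
      · intro i _
        have : P.mulVec x i = ∑ j, P i j * x j := by
          simp [Matrix.mulVec, dotProduct]
        rw [this]
        exact jensen_sq n (P i) x (hpos i) (hrow i)
      · refine ⟨i0, Finset.mem_univ i0, ?_⟩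
        have : P.mulVec x i0 = ∑ j, P i0 j * x j := by
          simp [Matrix.mulVec, dotProduct]
        rw [this]
        exact jensen_sq_strict n (P i0) x (hpos i0) (hrow i0) j k hjk
    have step2 : ∑ i, ∑ j, P i j * x j ^ 2 = ∑ i, x i ^ 2 := by
      rw [Finset.sum_comm]
      refine Finset.sum_congr rfl fun j _ => ?_
      rw [← Finset.sum_mul, hcol j, one_mul]
    rwa [step2] at step1
  rw [EuclideanSpace.norm_eq, EuclideanSpace.norm_eq]
  apply Real.sqrt_lt_sqrt
  · exact Finset.sum_nonneg fun i _ => sq_nonneg _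
  · simpa [sq_abs] using key
end
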